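/- arXiv:2108.11483 — 2 statements merged into one kernel-verified Lean document; each statement's English description precedes it below -/
import Mathlib

section
/- Let f : ℝ^p → ℝ be differentiable, m-strongly convex and M-smooth. Then for all x, y ∈ ℝ^p, ⟨∇f(x) − ∇f(y), x − y⟩ ≥ (mM/(m+M))‖x−y‖² + (1/(m+M))‖∇f(x) − ∇f(y)‖². -/
open scoped RealInnerProductSpace

set_option maxHeartbeats 1000000 in
/-- Co-coercivity for strongly convex and smooth functions. -/
theorem strongly_convex_smooth_cocoercivity
    {p : ℕ} (f : EuclideanSpace ℝ (Fin p) → ℝ) (f' : EuclideanSpace ℝ (Fin p) → EuclideanSpace ℝ (Fin p))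
    (m M : ℝ) (hm : 0 < m) (hM : 0 < M)
    (hgrad : ∀ x, HasGradientAt f (f' x) x)
    (hsc : ∀ x y, f x + ⟪f' x, y - x⟫ + m / 2 * ‖y - x‖ ^ 2 ≤ f y)
    (hsm : ∀ x y, f y ≤ f x + ⟪f' x, y - x⟫ + M / 2 * ‖y - x‖ ^ 2) :
    ∀ x y, ⟪f' x - f' y, x - y⟫ ≥
      m * M / (m + M) * ‖x - y‖ ^ 2 + 1 / (m + M) * ‖f' x - f' y‖ ^ 2 := by
  intro x y
  set u : EuclideanSpace ℝ (Fin p) := f' x - f' y with hu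
  set d : EuclideanSpace ℝ (Fin p) := x - y with hd
  set w : EuclideanSpace ℝ (Fin p) := u - m • d with hw
  have key : ∀ t : ℝ, (2 * t - (M - m) * t ^ 2) * ‖w‖ ^ 2 ≤ ⟪w, d⟫ := by
    intro t
    have e1 := le_trans (hsc x (y + t • w)) (hsm y (y + t • w))
    have e2 := le_trans (hsc y (x - t • w)) (hsm x (x - t • w))
    simp only [hw, hu, hd, ← real_inner_self_eq_norm_sq] at e1 e2 ⊢
    simp only [inner_add_left, inner_add_right, inner_sub_left, inner_sub_right,
      real_inner_smul_left, real_inner_smul_right, real_inner_comm] at e1 e2 ⊢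
    nlinarith [e1, e2]
  have huw : u = w + m • d := by rw [hw]; abel
  have hud : ⟪u, d⟫ = ⟪w, d⟫ + m * ‖d‖ ^ 2 := by
    rw [huw]
    simp only [inner_add_left, real_inner_smul_left, real_inner_self_eq_norm_sq]
  have huu : ‖u‖ ^ 2 = ‖w‖ ^ 2 + 2 * m * ⟪w, d⟫ + m ^ 2 * ‖d‖ ^ 2 := by
    rw [huw]
    simp only [← real_inner_self_eq_norm_sq, inner_add_left, inner_add_right,
      real_inner_smul_left, real_inner_smul_right, real_inner_comm d w]
    ring
  have hsum : (0:ℝ) < m + M := by linarith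
  have goal_eq : m * M / (m + M) * ‖d‖ ^ 2 + 1 / (m + M) * ‖u‖ ^ 2
      = (m * M * ‖d‖ ^ 2 + ‖u‖ ^ 2) / (m + M) := by ring
  rw [ge_iff_le, goal_eq, div_le_iff₀ hsum, hud, huu]
  -- goal is now: m*M*‖d‖^2 + (‖w‖^2 + 2m⟪w,d⟫ + m^2‖d‖^2) ≤ (⟪w,d⟫ + m‖d‖^2)*(m+M)
  -- which is equivalent to ‖w‖^2 ≤ (M-m)*⟪w,d⟫
  suffices hk' : ‖w‖ ^ 2 ≤ (M - m) * ⟪w, d⟫ by nlinarith [hk']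
  by_cases hw0 : w = 0
  · rw [hw0]; simp
  · have hwpos : (0:ℝ) < ‖w‖ ^ 2 := pow_pos (norm_pos_iff.mpr hw0) 2
    have hmM : m ≤ M := by
      have h1 := hsc x (x + w)
      have h2 := hsm x (x + w)
      have h3 : m / 2 * ‖x + w - x‖ ^ 2 ≤ M / 2 * ‖x + w - x‖ ^ 2 := by linarith
      have h4 : ‖x + w - x‖ ^ 2 = ‖w‖ ^ 2 := by rw [add_sub_cancel_left]
      rw [h4] at h3
      nlinarith [h3, hwpos]
    rcases eq_or_lt_of_le hmM with hEq | hLt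
    · exfalso
      have hk := key ((⟪w, d⟫ / ‖w‖ ^ 2 + 1) / 2)
      rw [← hEq] at hk
      have hne : ‖w‖ ^ 2 ≠ 0 := ne_of_gt hwpos
      have hcoef : (2 * ((⟪w, d⟫ / ‖w‖ ^ 2 + 1) / 2) - (m - m) * ((⟪w, d⟫ / ‖w‖ ^ 2 + 1) / 2) ^ 2)
          * ‖w‖ ^ 2 = ⟪w, d⟫ + ‖w‖ ^ 2 := by
        field_simp
        ring
      rw [hcoef] at hk
      linarith
    · have hMm : (0:ℝ) < M - m := by linarith
      have hk := key (1 / (M - m))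
      have hco : (2 * (1 / (M - m)) - (M - m) * (1 / (M - m)) ^ 2) = 1 / (M - m) := by
        field_simp
        ring
      rw [hco] at hk
      have hk2 := mul_le_mul_of_nonneg_left hk (le_of_lt hMm)
      have hcancel : (M - m) * (1 / (M - m) * ‖w‖ ^ 2) = ‖w‖ ^ 2 := by
        field_simp
      rw [hcancel] at hk2
      exact hk2
end

section
/- (Freedman's inequality) Let d₁, …, d_T be a martingale difference sequence adapted to a filtration, with |d_i| ≤ b almost surely. Let V_s = Σ_{i=1}^s Var(d_i | F_{i−1}). Then for every a, v > 0, P(∃ s ≤ T : Σ_{i=1}^s d_i ≥ a and V_s ≤ v) ≤ exp(−a²/(2(v + b a))). -/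
/-!
For `0 ≤ λ` with `λ b < 1` put `c = λ² / (2 (1 - λ b))`. Since
`e^y ≤ 1 + y + y² / (2 (1 - λ b))` whenever `|y| ≤ λ b`, each increment satisfies
`E[e^{λ d_i} | F_{i-1}] ≤ e^{c Var(d_i | F_{i-1})}`, so `M_s = exp (λ S_s - c V_s)` is a
positive supermartingale with `M_0 = 1`. On the event in question some `M_s` with `s ≤ T` reaches
`e^{λ a - c v}`, and optional stopping at the first such time bounds its probability by
`e^{-(λ a - c v)}`. The choice `λ = a / (v + b a)` makes the exponent `a² / (2 (v + b a))`.
-/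

open MeasureTheory Finset

namespace Real

theorem exp_le_one_add_add_sq_div_two_of_nonpos {y : ℝ} (hy : y ≤ 0) :
    exp y ≤ 1 + y + y ^ 2 / 2 := by
  have hanti : Antitone fun x : ℝ => 1 + x + x ^ 2 / 2 - exp x := by
    refine antitone_of_deriv_nonpos (by fun_prop) fun x => ?_
    have hderiv : HasDerivAt (fun x : ℝ => 1 + x + x ^ 2 / 2 - exp x) (1 + x - exp x) x := by
      refine ((((hasDerivAt_id' x).const_add 1).add ((hasDerivAt_pow 2 x).div_const 2)).sub
        (hasDerivAt_exp x)).congr_deriv ?_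
      norm_num
    rw [hderiv.deriv]
    linarith [add_one_le_exp x]
  have := hanti hy
  norm_num at this
  linarith

theorem exp_le_one_add_add_sq_div_of_abs_le {y β : ℝ} (hy : |y| ≤ β) (hβ : β < 1) :
    exp y ≤ 1 + y + y ^ 2 / (2 * (1 - β)) := by
  have hβ0 : 0 ≤ β := (abs_nonneg y).trans hy
  rcases le_total y 0 with hy0 | hy0
  · calc exp y ≤ 1 + y + y ^ 2 / 2 := exp_le_one_add_add_sq_div_two_of_nonpos hy0
      _ ≤ 1 + y + y ^ 2 / (2 * (1 - β)) := by gcongr; linarith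
  · have hyβ : y ≤ β := (le_abs_self y).trans hy
    calc exp y ≤ (2 + y) / (2 - y) := exp_le_two_add_div_two_sub hy0 (by linarith)
      _ = 1 + y + y ^ 2 / (2 - y) := by
        have : 2 - y ≠ 0 := by linarith
        field_simp
        ring
      _ ≤ 1 + y + y ^ 2 / (2 * (1 - β)) := by gcongr; linarith

end Real

namespace MeasureTheory

variable {Ω : Type*} {m m0 : MeasurableSpace Ω} {μ : Measure Ω}

theorem integrable_exp_mul_of_abs_le [IsFiniteMeasure μ] {X : Ω → ℝ} {b l : ℝ}
    (hX : AEStronglyMeasurable X μ) (hXb : ∀ᵐ ω ∂μ, |X ω| ≤ b) (hl : 0 ≤ l) :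
    Integrable (fun ω => Real.exp (l * X ω)) μ := by
  refine .of_bound (Real.continuous_exp.comp_aestronglyMeasurable (hX.const_mul l))
    (Real.exp (l * b)) ?_
  filter_upwards [hXb] with ω hω
  rw [Real.norm_of_nonneg (Real.exp_pos _).le, Real.exp_le_exp]
  exact mul_le_mul_of_nonneg_left (abs_le.1 hω).2 hl

theorem condExp_exp_mul_le_exp_mul_condExp_sq [IsFiniteMeasure μ] (hm : m ≤ m0) {X : Ω → ℝ}
    {b l : ℝ} (hX : Integrable X μ) (hXm : μ[X | m] =ᵐ[μ] 0) (hXb : ∀ᵐ ω ∂μ, |X ω| ≤ b)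
    (hl : 0 ≤ l) (hlb : l * b < 1) :
    μ[fun ω => Real.exp (l * X ω) | m] ≤ᵐ[μ]
      fun ω => Real.exp (l ^ 2 / (2 * (1 - l * b)) * μ[fun ω => X ω ^ 2 | m] ω) := by
  set c := l ^ 2 / (2 * (1 - l * b))
  have hX2 : Integrable (fun ω => X ω ^ 2) μ := by
    refine .of_bound (hX.aestronglyMeasurable.pow 2) (b ^ 2) ?_
    filter_upwards [hXb] with ω hω
    rw [Real.norm_eq_abs, abs_pow]
    exact pow_le_pow_left₀ (abs_nonneg _) hω 2
  have hexp := integrable_exp_mul_of_abs_le hX.aestronglyMeasurable hXb hl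
  have hquad_eq : (fun ω => 1 + l * X ω + c * X ω ^ 2) =
      (fun _ => (1 : ℝ)) + (l • X + c • fun ω => X ω ^ 2) := by
    ext ω; simp [add_assoc]
  have hquad : Integrable (fun ω => 1 + l * X ω + c * X ω ^ 2) μ := by
    rw [hquad_eq]; exact (integrable_const _).add ((hX.smul l).add (hX2.smul c))
  have hle : (fun ω => Real.exp (l * X ω)) ≤ᵐ[μ] fun ω => 1 + l * X ω + c * X ω ^ 2 := by
    filter_upwards [hXb] with ω hω
    have hlX : |l * X ω| ≤ l * b := by
      rw [abs_mul, abs_of_nonneg hl]; exact mul_le_mul_of_nonneg_left hω hl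
    convert Real.exp_le_one_add_add_sq_div_of_abs_le hlX hlb using 2
    ring
  have hcond_quad : μ[fun ω => 1 + l * X ω + c * X ω ^ 2 | m] =ᵐ[μ]
      fun ω => 1 + c * μ[fun ω => X ω ^ 2 | m] ω := by
    rw [hquad_eq]
    filter_upwards [condExp_add (integrable_const _) ((hX.smul l).add (hX2.smul c)) m,
      condExp_add (hX.smul l) (hX2.smul c) m, condExp_smul l X m,
      condExp_smul c (fun ω => X ω ^ 2) m, hXm] with ω h1 h2 h3 h4 h5
    rw [h1, Pi.add_apply, h2, Pi.add_apply, h3, h4, condExp_const hm]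
    simp [h5]
  filter_upwards [condExp_mono hexp hquad hle, hcond_quad] with ω h1 h2
  rw [h2] at h1
  linarith [Real.add_one_le_exp (c * μ[fun ω => X ω ^ 2 | m] ω)]

variable {𝒢 : Filtration ℕ m0} {M : ℕ → Ω → ℝ}

theorem Supermartingale.integrable_stoppedValue (hM : Supermartingale M 𝒢 μ) {τ : Ω → WithTop ℕ}
    (hτ : IsStoppingTime 𝒢 τ) {N : ℕ} (hτN : ∀ ω, τ ω ≤ N) :
    Integrable (stoppedValue M τ) μ := by
  simpa [stoppedValue_neg] using (hM.neg.integrable_stoppedValue hτ hτN).neg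

theorem Supermartingale.integral_stoppedValue_le [SigmaFiniteFiltration μ 𝒢]
    (hM : Supermartingale M 𝒢 μ) {τ : Ω → WithTop ℕ} (hτ : IsStoppingTime 𝒢 τ) {N : ℕ}
    (hτN : ∀ ω, τ ω ≤ N) : ∫ ω, stoppedValue M τ ω ∂μ ≤ ∫ ω, M 0 ω ∂μ := by
  have := hM.neg.expected_stoppedValue_mono (isStoppingTime_const 𝒢 0) hτ
    (fun _ => zero_le) hτN
  simpa [stoppedValue_neg, integral_neg, stoppedValue] using this

theorem Supermartingale.mul_measureReal_exists_le_le_integral [IsFiniteMeasure μ]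
    (hM : Supermartingale M 𝒢 μ) (hM_nonneg : ∀ s, 0 ≤ᵐ[μ] M s) (T : ℕ) {ε : ℝ} (hε : 0 ≤ ε) :
    ε * μ.real {ω | ∃ s ≤ T, ε ≤ M s ω} ≤ ∫ ω, M 0 ω ∂μ := by
  set τ : Ω → WithTop ℕ := fun ω => (hittingBtwn M (Set.Ici ε) 0 T ω : ℕ)
  have hτ : IsStoppingTime 𝒢 τ :=
    hM.stronglyAdapted.adapted.isStoppingTime_hittingBtwn measurableSet_Ici
  have hτT : ∀ ω, τ ω ≤ T := fun ω => WithTop.coe_le_coe.2 (hittingBtwn_le ω)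
  have hsub : {ω | ∃ s ≤ T, ε ≤ M s ω} ⊆ {ω | ε ≤ stoppedValue M τ ω} :=
    fun ω ⟨s, hsT, hs⟩ => stoppedValue_hittingBtwn_mem ⟨s, ⟨zero_le, hsT⟩, hs⟩
  have hstopped_nonneg : 0 ≤ᵐ[μ] stoppedValue M τ := by
    filter_upwards [ae_all_iff.2 hM_nonneg] with ω hω using hω _
  calc ε * μ.real {ω | ∃ s ≤ T, ε ≤ M s ω}
      ≤ ε * μ.real {ω | ε ≤ stoppedValue M τ ω} := by gcongr; exact measure_ne_top _ _
    _ ≤ ∫ ω, stoppedValue M τ ω ∂μ := mul_meas_ge_le_integral_of_nonneg hstopped_nonneg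
        (hM.integrable_stoppedValue hτ hτT) ε
    _ ≤ ∫ ω, M 0 ω ∂μ := hM.integral_stoppedValue_le hτ hτT

end MeasureTheory

section Freedman

variable {Ω : Type*} {m0 : MeasurableSpace Ω} {μ : Measure Ω} {ℱ : Filtration ℕ m0}
  {d : ℕ → Ω → ℝ} {b l c : ℝ}

/-- `M_s = exp (λ S_s - c V_s)` with `l = λ`, `S_s = ∑_{i<s} d_i`, `V_s = ∑_{i<s} E[d_i² | ℱ_i]`;
here `d i` is the paper's `d_{i+1}`, measurable with respect to `ℱ (i + 1)`. -/
noncomputable def freedmanExp (μ : Measure Ω) (ℱ : Filtration ℕ m0) (d : ℕ → Ω → ℝ) (l c : ℝ)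
    (s : ℕ) (ω : Ω) : ℝ :=
  Real.exp (l * ∑ i ∈ range s, d i ω - c * ∑ i ∈ range s, μ[fun ω => d i ω ^ 2 | ℱ i] ω)

theorem freedmanExp_pos (s : ℕ) (ω : Ω) : 0 < freedmanExp μ ℱ d l c s ω :=
  Real.exp_pos _

theorem freedmanExp_zero : freedmanExp μ ℱ d l c 0 = 1 := by
  ext; simp [freedmanExp]

theorem freedmanExp_succ (s : ℕ) (ω : Ω) :
    freedmanExp μ ℱ d l c (s + 1) ω = freedmanExp μ ℱ d l c s ω *
      Real.exp (-c * μ[fun ω => d s ω ^ 2 | ℱ s] ω) * Real.exp (l * d s ω) := by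
  simp only [freedmanExp, sum_range_succ, ← Real.exp_add]
  ring_nf

theorem stronglyAdapted_freedmanExp (hadp : ∀ i, StronglyMeasurable[ℱ (i + 1)] (d i)) :
    StronglyAdapted ℱ (freedmanExp μ ℱ d l c) := by
  intro s
  have hsum : StronglyMeasurable[ℱ s] fun ω => ∑ i ∈ range s, d i ω :=
    Finset.stronglyMeasurable_fun_sum _ fun i hi => (hadp i).mono (ℱ.mono (mem_range.1 hi))
  have hvar : StronglyMeasurable[ℱ s] fun ω => ∑ i ∈ range s, μ[fun ω => d i ω ^ 2 | ℱ i] ω :=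
    Finset.stronglyMeasurable_fun_sum _ fun i hi =>
      stronglyMeasurable_condExp.mono (ℱ.mono (mem_range.1 hi).le)
  exact Real.continuous_exp.comp_stronglyMeasurable
    ((stronglyMeasurable_const.mul hsum).sub (stronglyMeasurable_const.mul hvar))

theorem freedmanExp_le_exp (hbdd : ∀ i, ∀ᵐ ω ∂μ, |d i ω| ≤ b) (hl : 0 ≤ l) (hc : 0 ≤ c)
    (s : ℕ) : ∀ᵐ ω ∂μ, freedmanExp μ ℱ d l c s ω ≤ Real.exp (l * (s * b)) := by
  have hvar_nonneg : ∀ i, 0 ≤ᵐ[μ] μ[fun ω => d i ω ^ 2 | ℱ i] := fun i =>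
    condExp_nonneg (ae_of_all _ fun ω => sq_nonneg _)
  filter_upwards [ae_all_iff.2 hbdd, ae_all_iff.2 hvar_nonneg] with ω hdb hvar
  have hsum : ∑ i ∈ range s, d i ω ≤ s * b := by
    simpa using sum_le_sum fun i (_ : i ∈ range s) => (abs_le.1 (hdb i)).2
  rw [freedmanExp, Real.exp_le_exp]
  nlinarith [sum_nonneg fun i (_ : i ∈ range s) => hvar i, mul_le_mul_of_nonneg_left hsum hl]

theorem integrable_freedmanExp (hadp : ∀ i, StronglyMeasurable[ℱ (i + 1)] (d i))
    (hbdd : ∀ i, ∀ᵐ ω ∂μ, |d i ω| ≤ b) (hl : 0 ≤ l) (hc : 0 ≤ c) [IsFiniteMeasure μ] (s : ℕ) :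
    Integrable (freedmanExp μ ℱ d l c s) μ := by
  refine .of_bound ((stronglyAdapted_freedmanExp hadp s).mono (ℱ.le s)).aestronglyMeasurable
    (Real.exp (l * (s * b))) ?_
  filter_upwards [freedmanExp_le_exp hbdd hl hc s] with ω hω
  rwa [Real.norm_of_nonneg (freedmanExp_pos s ω).le]

theorem supermartingale_freedmanExp [IsFiniteMeasure μ]
    (hadp : ∀ i, StronglyMeasurable[ℱ (i + 1)] (d i)) (hint : ∀ i, Integrable (d i) μ)
    (hmds : ∀ i, μ[d i | ℱ i] =ᵐ[μ] 0) (hbdd : ∀ i, ∀ᵐ ω ∂μ, |d i ω| ≤ b)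
    (hl : 0 ≤ l) (hlb : l * b < 1) :
    Supermartingale (freedmanExp μ ℱ d l (l ^ 2 / (2 * (1 - l * b)))) ℱ μ := by
  set c := l ^ 2 / (2 * (1 - l * b))
  have hc : 0 ≤ c := div_nonneg (sq_nonneg l) (by linarith)
  refine supermartingale_nat (stronglyAdapted_freedmanExp hadp)
    (integrable_freedmanExp hadp hbdd hl hc) fun s => ?_
  -- `M_{s+1} = G e^{λ d_s}` with `G` `ℱ s`-measurable, so `G` leaves the conditional expectation
  set G : Ω → ℝ := fun ω =>
    freedmanExp μ ℱ d l c s ω * Real.exp (-c * μ[fun ω => d s ω ^ 2 | ℱ s] ω)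
  have hG : StronglyMeasurable[ℱ s] G :=
    (stronglyAdapted_freedmanExp hadp s).mul (Real.continuous_exp.comp_stronglyMeasurable
      (stronglyMeasurable_const.mul stronglyMeasurable_condExp))
  have hsucc : freedmanExp μ ℱ d l c (s + 1) = G * fun ω => Real.exp (l * d s ω) :=
    funext (freedmanExp_succ s)
  have hexp_int := integrable_exp_mul_of_abs_le (hint s).aestronglyMeasurable (hbdd s) hl
  have hpull := condExp_mul_of_stronglyMeasurable_left hG
    (hsucc ▸ integrable_freedmanExp hadp hbdd hl hc (s + 1)) hexp_int
  filter_upwards [hpull, condExp_exp_mul_le_exp_mul_condExp_sq (ℱ.le s) (hint s) (hmds s)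
    (hbdd s) hl hlb] with ω hpull_ω hstep
  rw [hsucc, hpull_ω, Pi.mul_apply]
  calc G ω * μ[fun ω => Real.exp (l * d s ω) | ℱ s] ω
      ≤ G ω * Real.exp (c * μ[fun ω => d s ω ^ 2 | ℱ s] ω) := by
        gcongr
        exact (mul_pos (freedmanExp_pos s ω) (Real.exp_pos _)).le
    _ = freedmanExp μ ℱ d l c s ω := by
      rw [mul_assoc, ← Real.exp_add]; simp

theorem measure_exists_sum_ge_and_condVar_le_le_exp [IsProbabilityMeasure μ]
    (hadp : ∀ i, StronglyMeasurable[ℱ (i + 1)] (d i)) (hint : ∀ i, Integrable (d i) μ)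
    (hmds : ∀ i, μ[d i | ℱ i] =ᵐ[μ] 0) (hbdd : ∀ i, ∀ᵐ ω ∂μ, |d i ω| ≤ b)
    (hl : 0 ≤ l) (hlb : l * b < 1) (T : ℕ) (a v : ℝ) :
    μ {ω | ∃ s ≤ T, a ≤ ∑ i ∈ range s, d i ω ∧
        ∑ i ∈ range s, μ[fun ω => d i ω ^ 2 | ℱ i] ω ≤ v}
      ≤ ENNReal.ofReal (Real.exp (-(l * a - l ^ 2 / (2 * (1 - l * b)) * v))) := by
  set c := l ^ 2 / (2 * (1 - l * b))
  have hc : 0 ≤ c := div_nonneg (sq_nonneg l) (by linarith)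
  set ε := Real.exp (l * a - c * v)
  have hmax := (supermartingale_freedmanExp hadp hint hmds hbdd hl hlb
    ).mul_measureReal_exists_le_le_integral
    (fun s => ae_of_all _ fun ω => (freedmanExp_pos s ω).le) T (Real.exp_pos (l * a - c * v)).le
  rw [freedmanExp_zero] at hmax
  have hsub : {ω | ∃ s ≤ T, a ≤ ∑ i ∈ range s, d i ω ∧
        ∑ i ∈ range s, μ[fun ω => d i ω ^ 2 | ℱ i] ω ≤ v} ⊆
      {ω | ∃ s ≤ T, ε ≤ freedmanExp μ ℱ d l c s ω} := by
    rintro ω ⟨s, hsT, hsum, hvar⟩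
    refine ⟨s, hsT, Real.exp_le_exp.2 ?_⟩
    nlinarith [mul_le_mul_of_nonneg_left hsum hl, mul_le_mul_of_nonneg_left hvar hc]
  calc _ ≤ μ {ω | ∃ s ≤ T, ε ≤ freedmanExp μ ℱ d l c s ω} := measure_mono hsub
    _ = ENNReal.ofReal (μ.real {ω | ∃ s ≤ T, ε ≤ freedmanExp μ ℱ d l c s ω}) :=
        (ofReal_measureReal (measure_ne_top _ _)).symm
    _ ≤ ENNReal.ofReal (Real.exp (-(l * a - c * v))) := by
        gcongr
        rw [Real.exp_neg, ← one_div, le_div_iff₀' (Real.exp_pos _)]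
        simpa using hmax

end Freedman

/-- Freedman's inequality for bounded martingale difference sequences. -/
theorem freedman_inequality
    {Ω : Type*} {m0 : MeasurableSpace Ω} (μ : Measure Ω) [IsProbabilityMeasure μ]
    (ℱ : Filtration ℕ m0)
    (d : ℕ → Ω → ℝ) (T : ℕ) (b : ℝ) (hb : 0 < b)
    (hadp : ∀ i, StronglyMeasurable[ℱ (i + 1)] (d i))
    (hint : ∀ i, Integrable (d i) μ)
    (hmds : ∀ i, μ[d i | ℱ i] =ᵐ[μ] 0)
    (hbdd : ∀ i, ∀ᵐ ω ∂μ, |d i ω| ≤ b)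
    (a v : ℝ) (ha : 0 < a) (hv : 0 < v) :
    μ {ω | ∃ s ≤ T, a ≤ ∑ i ∈ Finset.range s, d i ω ∧
        (∑ i ∈ Finset.range s, (μ[(fun ω' => (d i ω') ^ 2) | ℱ i]) ω) ≤ v}
      ≤ ENNReal.ofReal (Real.exp (-a ^ 2 / (2 * (v + b * a)))) := by
  have hvba : 0 < v + b * a := by positivity
  have hlb : a / (v + b * a) * b < 1 := by
    rw [div_mul_eq_mul_div, div_lt_one hvba]; nlinarith
  have hexponent : a / (v + b * a) * a - (a / (v + b * a)) ^ 2 /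
      (2 * (1 - a / (v + b * a) * b)) * v = a ^ 2 / (2 * (v + b * a)) := by
    have h1 : 1 - a / (v + b * a) * b = v / (v + b * a) := by field_simp; ring
    rw [h1]; field_simp; ring
  simpa [hexponent, neg_div] using
    measure_exists_sum_ge_and_condVar_le_le_exp hadp hint hmds hbdd (by positivity) hlb T a v
end
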